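/- arXiv:1407.3939 — 2 statements merged into one kernel-verified Lean document; each statement's English description precedes it below -/
import Mathlib

section
/- Let k ≥ 2 and assume (H3a). Then for every x ∈ [1/k, 1 − 1/k]: |𝓑∞(x) − (s″(x))²/(144 k⁴)| ≤ 3C₃(‖s″‖_∞ + 3C₃/2)/(4 k⁵). -/
open MeasureTheory

/-- Left endpoint of the cell containing `x` in the toy-model partition
`{[0,(1−T)/k), [(1−T)/k,(2−T)/k), …, [(k−T)/k,1)}` of `[0,1)`:
the grid cell of `x` is `[(j−T)/k, (j+1−T)/k)` with `j = ⌊kx+T⌋`, clipped to `[0,1]`. -/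
noncomputable def toyA (k : ℕ) (T x : ℝ) : ℝ :=
  max 0 (((⌊(k : ℝ) * x + T⌋ : ℝ) - T) / k)

/-- Right endpoint of the cell containing `x` in the toy-model partition. -/
noncomputable def toyB (k : ℕ) (T x : ℝ) : ℝ :=
  min 1 (((⌊(k : ℝ) * x + T⌋ : ℝ) + 1 - T) / k)

/-- The partition projection `s̃_U(x)`: average of `s` over the toy-model cell of `x`. -/
noncomputable def toyProj (k : ℕ) (s : ℝ → ℝ) (T x : ℝ) : ℝ :=
  (∫ t in Set.Ico (toyA k T x) (toyB k T x), s t) / (toyB k T x - toyA k T x)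

/-!
For `x ∈ [1/k, 1 - 1/k]` the cell of `x` is never clipped by the boundary of `[0,1)`: it is
`[x - u/k, x + (1-u)/k)` with `u = fract (k x + T)`, and `u` is again uniform on `[0,1)`, so the
forest average is `∫₀¹` of the cell mean in `u`. Replacing `s` by its second-order Taylor
polynomial at `x` moves every cell mean by at most `C₃/k³`, and for the polynomial the averaged
cell mean is exactly `s x + s''(x)/(12k²)`. Squaring `s x - E_T s̃ = -s''(x)/(12k²) + O(C₃/k³)`
gives the bound.
-/

open Set

lemma integral_quadratic (a b c p q : ℝ) :
    ∫ y in p..q, (a + b * y + c * y ^ 2)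
      = a * (q - p) + b * (q ^ 2 - p ^ 2) / 2 + c * (q ^ 3 - p ^ 3) / 3 := by
  have h1 : IntervalIntegrable (fun _ : ℝ => a) volume p q := intervalIntegrable_const
  have h2 : IntervalIntegrable (fun y : ℝ => b * y) volume p q :=
    Continuous.intervalIntegrable (by fun_prop) _ _
  have h3 : IntervalIntegrable (fun y : ℝ => c * y ^ 2) volume p q :=
    Continuous.intervalIntegrable (by fun_prop) _ _
  rw [intervalIntegral.integral_add (h1.add h2) h3, intervalIntegral.integral_add h1 h2,
    intervalIntegral.integral_const, intervalIntegral.integral_const_mul,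
    intervalIntegral.integral_const_mul, integral_id, integral_pow, smul_eq_mul]
  ring

lemma setIntegral_Ico_comp_fract_add {E : Type*} [NormedAddCommGroup E] [NormedSpace ℝ E]
    (f : ℝ → E) (c : ℝ) :
    ∫ T in Ico (0 : ℝ) 1, f (Int.fract (c + T)) = ∫ u in (0 : ℝ)..1, f u := by
  have hper : Function.Periodic (fun y => f (Int.fract y)) 1 := fun y => by
    simp [Int.fract_add_one]
  rw [integral_Ico_eq_integral_Ioc, ← intervalIntegral.integral_of_le zero_le_one,
    intervalIntegral.integral_comp_add_left (fun y => f (Int.fract y)), add_zero,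
    hper.intervalIntegral_add_eq c 0, zero_add, intervalIntegral.integral_of_le zero_le_one,
    intervalIntegral.integral_of_le zero_le_one, integral_Ioc_eq_integral_Ioo,
    integral_Ioc_eq_integral_Ioo]
  exact setIntegral_congr_fun measurableSet_Ioo fun y hy => by
    rw [Int.fract_eq_self.2 ⟨hy.1.le, hy.2⟩]

lemma integrableOn_of_abs_sub_le {s q : ℝ → ℝ} {S : Set ℝ} {C : ℝ} (hS : MeasurableSet S)
    (hSfin : volume S < ⊤) (hs : ContinuousOn s S) (hq : IntegrableOn q S)
    (h : ∀ t ∈ S, |s t - q t| ≤ C) : IntegrableOn s S := by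
  have hsub : IntegrableOn (fun t => s t - q t) S :=
    Integrable.mono' (integrableOn_const hSfin.ne)
      ((hs.aestronglyMeasurable hS).sub hq.aestronglyMeasurable)
      ((ae_restrict_mem hS).mono fun t ht => (Real.norm_eq_abs _).trans_le (h t ht))
  exact (hsub.add hq).congr_fun (fun t _ => sub_add_cancel (s t) (q t)) hS

lemma abs_sq_sub_sq_le {a b ε : ℝ} (h : |a - b| ≤ ε) : |a ^ 2 - b ^ 2| ≤ ε * (2 * |b| + ε) := by
  have hε : 0 ≤ ε := (abs_nonneg _).trans h
  calc |a ^ 2 - b ^ 2| = |a - b| * |(a - b) + 2 * b| := by rw [← abs_mul]; ring_nf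
    _ ≤ ε * (|a - b| + 2 * |b|) := by
        gcongr
        exact (abs_add_le _ _).trans (by rw [abs_mul, abs_two])
    _ ≤ ε * (2 * |b| + ε) := by nlinarith

lemma abs_sq_sub_le_of_abs_sub_le {K C M y d E : ℝ} (hK : 2 ≤ K) (hC : 0 ≤ C) (hd : |d| ≤ M)
    (hE : |E - (y + d / (12 * K ^ 2))| ≤ C / K ^ 3) :
    |(y - E) ^ 2 - d ^ 2 / (144 * K ^ 4)| ≤ 3 * C * (M + 3 * C / 2) / (4 * K ^ 5) := by
  have hK0 : 0 < K := by linarith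
  have hM : 0 ≤ M := (abs_nonneg _).trans hd
  calc _ = |(y - E) ^ 2 - (-(d / (12 * K ^ 2))) ^ 2| := by ring_nf
    _ ≤ C / K ^ 3 * (2 * |-(d / (12 * K ^ 2))| + C / K ^ 3) :=
        abs_sq_sub_sq_le (by rw [abs_sub_comm]; convert hE using 2; ring)
    _ ≤ C / K ^ 3 * (2 * (M / (12 * K ^ 2)) + C / K ^ 3) := by
        rw [abs_neg, abs_div, abs_of_pos (by positivity : 0 < 12 * K ^ 2)]
        gcongr
    _ = (C * M / 6 + C ^ 2 / K) / K ^ 5 := by field_simp; ring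
    _ ≤ (C * M / 6 + C ^ 2 / 2) / K ^ 5 := by gcongr
    _ ≤ (3 * C * (M + 3 * C / 2) / 4) / K ^ 5 := by
        gcongr
        nlinarith [mul_nonneg hC hM]
    _ = 3 * C * (M + 3 * C / 2) / (4 * K ^ 5) := by ring

noncomputable def cellMean (K : ℝ) (s : ℝ → ℝ) (x u : ℝ) : ℝ :=
  K * ∫ t in Ico (x - u / K) (x + (1 - u) / K), s t

section cellMean

variable {K : ℝ}

lemma cell_length (hK : K ≠ 0) (x u : ℝ) : x + (1 - u) / K - (x - u / K) = K⁻¹ := by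
  field_simp
  ring

lemma cell_bounds (hK : 0 < K) {x u : ℝ} (hu : u ∈ Icc (0 : ℝ) 1) :
    x - K⁻¹ ≤ x - u / K ∧ x - u / K ≤ x + (1 - u) / K ∧ x + (1 - u) / K ≤ x + K⁻¹ := by
  have h1 : u / K ≤ K⁻¹ := by rw [div_le_iff₀ hK, inv_mul_cancel₀ hK.ne']; exact hu.2
  have h2 : (1 - u) / K ≤ K⁻¹ := by
    rw [div_le_iff₀ hK, inv_mul_cancel₀ hK.ne']; linarith [hu.1]
  have h3 : 0 ≤ u / K := div_nonneg hu.1 hK.le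
  have h4 : 0 ≤ (1 - u) / K := div_nonneg (by linarith [hu.2]) hK.le
  refine ⟨?_, ?_, ?_⟩ <;> linarith

lemma cellMean_quadratic (hK : 0 < K) (a b c x u : ℝ) :
    cellMean K (fun t => a + b * (t - x) + c * (t - x) ^ 2) x u
      = a + b * (1 - 2 * u) / (2 * K) + c * (1 - 3 * u + 3 * u ^ 2) / (3 * K ^ 2) := by
  have hle : x - u / K ≤ x + (1 - u) / K := by
    rw [← sub_nonneg, cell_length hK.ne']
    positivity
  rw [cellMean, integral_Ico_eq_integral_Ioc, ← intervalIntegral.integral_of_le hle,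
    intervalIntegral.integral_comp_sub_right (fun y => a + b * y + c * y ^ 2),
    integral_quadratic]
  field_simp
  ring

lemma integral_cellMean_quadratic (hK : 0 < K) (a b c x : ℝ) :
    ∫ u in (0 : ℝ)..1, cellMean K (fun t => a + b * (t - x) + c * (t - x) ^ 2) x u
      = a + c / (6 * K ^ 2) := by
  have hpoly : ∀ u : ℝ, a + b * (1 - 2 * u) / (2 * K) + c * (1 - 3 * u + 3 * u ^ 2) / (3 * K ^ 2)
      = (a + b / (2 * K) + c / (3 * K ^ 2)) + (-(b / K) - c / K ^ 2) * u
        + (c / K ^ 2) * u ^ 2 := fun u => by field_simp; ring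
  simp_rw [cellMean_quadratic hK, hpoly, integral_quadratic]
  field_simp
  ring

lemma abs_cellMean_sub_cellMean_le (hK : 0 < K) {s q : ℝ → ℝ} {x u ε : ℝ}
    (hs : IntegrableOn s (Ico (x - u / K) (x + (1 - u) / K)))
    (hq : IntegrableOn q (Ico (x - u / K) (x + (1 - u) / K)))
    (hε : ∀ t ∈ Ico (x - u / K) (x + (1 - u) / K), |s t - q t| ≤ ε) :
    |cellMean K s x u - cellMean K q x u| ≤ ε := by
  have hlen : volume.real (Ico (x - u / K) (x + (1 - u) / K)) = K⁻¹ := by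
    rw [Real.volume_real_Ico, cell_length hK.ne', max_eq_left (by positivity)]
  have hint : |∫ t in Ico (x - u / K) (x + (1 - u) / K), (s t - q t)| ≤ ε * K⁻¹ := by
    rw [← hlen]
    exact norm_setIntegral_le_of_norm_le_const measure_Ico_lt_top fun t ht =>
      (Real.norm_eq_abs _).trans_le (hε t ht)
  rw [cellMean, cellMean, ← mul_sub, ← integral_sub hs hq, abs_mul, abs_of_pos hK]
  calc K * |∫ t in Ico (x - u / K) (x + (1 - u) / K), (s t - q t)|
      ≤ K * (ε * K⁻¹) := by gcongr
    _ = ε := by field_simp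

lemma continuousOn_cellMean (hK : 0 < K) {s : ℝ → ℝ} {x : ℝ}
    (hs : IntegrableOn s (Ico (x - K⁻¹) (x + K⁻¹))) :
    ContinuousOn (cellMean K s x) (Icc 0 1) := by
  set W := Icc (x - K⁻¹) (x + K⁻¹)
  have hle : x - K⁻¹ ≤ x + K⁻¹ := by linarith [inv_pos.2 hK]
  have hsW : IntegrableOn s W := (integrableOn_Icc_iff_integrableOn_Ico).mpr hs
  have hF : ContinuousOn (fun y => ∫ t in (x - K⁻¹)..y, s t) W := by
    simpa [uIcc_of_le hle] using intervalIntegral.continuousOn_primitive_interval (b := x + K⁻¹)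
      (hsW.mono_set (uIcc_of_le hle).subset)
  have hend : ∀ u ∈ Icc (0 : ℝ) 1, x - u / K ∈ W ∧ x + (1 - u) / K ∈ W := fun u hu => by
    obtain ⟨h1, h2, h3⟩ := cell_bounds hK (x := x) hu
    exact ⟨⟨h1, h2.trans h3⟩, ⟨h1.trans h2, h3⟩⟩
  have hprim : ∀ y ∈ W, IntervalIntegrable s volume (x - K⁻¹) y := fun y hy =>
    (hsW.mono_set (by rw [uIcc_of_le hy.1]; exact Icc_subset_Icc_right hy.2)).intervalIntegrable
  refine ContinuousOn.congr (f := fun u =>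
    K * ((∫ t in (x - K⁻¹)..(x + (1 - u) / K), s t) - ∫ t in (x - K⁻¹)..(x - u / K), s t))
    (continuousOn_const.mul ((hF.comp (by fun_prop) fun u hu => (hend u hu).2).sub
      (hF.comp (by fun_prop) fun u hu => (hend u hu).1))) fun u hu => ?_
  dsimp only
  rw [cellMean, intervalIntegral.integral_interval_sub_left (hprim _ (hend u hu).2)
    (hprim _ (hend u hu).1), intervalIntegral.integral_of_le (cell_bounds hK hu).2.1,
    integral_Ico_eq_integral_Ioc]

lemma abs_integral_cellMean_sub_le (hK : 0 < K) {s : ℝ → ℝ} {x a b c ε : ℝ}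
    (hs : IntegrableOn s (Ico (x - K⁻¹) (x + K⁻¹)))
    (hε : ∀ t ∈ Ico (x - K⁻¹) (x + K⁻¹), |s t - (a + b * (t - x) + c * (t - x) ^ 2)| ≤ ε) :
    |(∫ u in (0 : ℝ)..1, cellMean K s x u) - (a + c / (6 * K ^ 2))| ≤ ε := by
  set q := fun t => a + b * (t - x) + c * (t - x) ^ 2
  have hq : IntegrableOn q (Ico (x - K⁻¹) (x + K⁻¹)) :=
    (Continuous.integrableOn_Icc (by fun_prop)).mono_set Ico_subset_Icc_self
  have hint : ∀ {f : ℝ → ℝ}, IntegrableOn f (Ico (x - K⁻¹) (x + K⁻¹)) →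
      IntervalIntegrable (cellMean K f x) volume 0 1 := fun hf =>
    ((continuousOn_cellMean hK hf).mono (uIcc_of_le zero_le_one).subset).intervalIntegrable
  rw [← integral_cellMean_quadratic hK a b c x,
    ← intervalIntegral.integral_sub (hint hs) (hint hq), ← Real.norm_eq_abs]
  refine le_of_le_of_eq (intervalIntegral.norm_integral_le_of_norm_le_const fun u hu => ?_)
    (by norm_num : ε * |(1 : ℝ) - 0| = ε)
  rw [uIoc_of_le zero_le_one] at hu
  obtain ⟨h1, -, h3⟩ := cell_bounds hK (x := x) (mem_Icc_of_Ioc hu)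
  have hsub := Ico_subset_Ico h1 h3
  exact abs_cellMean_sub_cellMean_le hK (hs.mono_set hsub) (hq.mono_set hsub)
    fun t ht => hε t (hsub ht)

end cellMean

lemma toyProj_eq_cellMean {k : ℕ} (hk : 0 < k) {x : ℝ}
    (hx : x ∈ Icc (k : ℝ)⁻¹ (1 - (k : ℝ)⁻¹)) (s : ℝ → ℝ) (T : ℝ) :
    toyProj k s T x = cellMean k s x (Int.fract (k * x + T)) := by
  have hK : (0 : ℝ) < k := by exact_mod_cast hk
  set u := Int.fract ((k : ℝ) * x + T)
  have hfloor : (⌊(k : ℝ) * x + T⌋ : ℝ) = k * x + T - u := (Int.self_sub_fract _).symm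
  have hu0 : 0 ≤ u := Int.fract_nonneg _
  have hu1 : u < 1 := Int.fract_lt_one _
  have hkx : 1 ≤ k * x ∧ k * x ≤ k - 1 := by
    have h1 := mul_le_mul_of_nonneg_left hx.1 hK.le
    have h2 := mul_le_mul_of_nonneg_left hx.2 hK.le
    rw [mul_inv_cancel₀ hK.ne'] at h1
    rw [mul_sub, mul_one, mul_inv_cancel₀ hK.ne'] at h2
    exact ⟨h1, h2⟩
  have hA : toyA k T x = x - u / k := by
    rw [toyA, hfloor, max_eq_right (by apply div_nonneg <;> linarith)]
    field_simp
    ring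
  have hB : toyB k T x = x + (1 - u) / k := by
    rw [toyB, hfloor, min_eq_right (by rw [div_le_one hK]; linarith)]
    field_simp
    ring
  rw [toyProj, cellMean, hA, hB, cell_length hK.ne', div_inv_eq_mul, mul_comm]

theorem toy_model_bias_H3a_general
    (k : ℕ) (hk : 2 ≤ k)
    (s ds dds : ℝ → ℝ) (C₃ M₂ : ℝ) (hC₃ : 0 < C₃)
    (hdiff : ∀ y ∈ Set.Ico (0 : ℝ) 1, HasDerivWithinAt s (ds y) (Set.Ico (0 : ℝ) 1) y)
    (hH3a : ∀ t ∈ Set.Ico (0 : ℝ) 1, ∀ y ∈ Set.Ico (0 : ℝ) 1,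
        |s t - s y - ds y * (t - y) - (1 / 2) * dds y * (t - y) ^ 2| ≤ C₃ * |t - y| ^ 3)
    (hM₂ : ∀ y ∈ Set.Ico (0 : ℝ) 1, |dds y| ≤ M₂)
    (x : ℝ) (hx : x ∈ Set.Icc ((k : ℝ)⁻¹) (1 - (k : ℝ)⁻¹)) :
    |(s x - ∫ T in Set.Ico (0 : ℝ) 1, toyProj k s T x) ^ 2
        - (dds x) ^ 2 / (144 * (k : ℝ) ^ 4)|
      ≤ 3 * C₃ * (M₂ + 3 * C₃ / 2) / (4 * (k : ℝ) ^ 5) := by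
  have hK : (2 : ℝ) ≤ k := by exact_mod_cast hk
  have hKinv : 0 < (k : ℝ)⁻¹ := by positivity
  set W := Ico (x - (k : ℝ)⁻¹) (x + (k : ℝ)⁻¹)
  have hW : W ⊆ Ico 0 1 := Ico_subset_Ico (by linarith [hx.1]) (by linarith [hx.2])
  have hxI : x ∈ Ico (0 : ℝ) 1 := hW ⟨by linarith, by linarith⟩
  have htaylor : ∀ t ∈ W,
      |s t - (s x + ds x * (t - x) + 1 / 2 * dds x * (t - x) ^ 2)| ≤ C₃ / k ^ 3 := by
    intro t ht
    have htx : |t - x| ≤ (k : ℝ)⁻¹ := abs_sub_le_iff.2 ⟨by linarith [ht.2], by linarith [ht.1]⟩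
    calc _ = |s t - s x - ds x * (t - x) - 1 / 2 * dds x * (t - x) ^ 2| := by ring_nf
      _ ≤ C₃ * |t - x| ^ 3 := hH3a t (hW ht) x hxI
      _ ≤ C₃ * (k : ℝ)⁻¹ ^ 3 := by gcongr
      _ = C₃ / k ^ 3 := by rw [inv_pow, div_eq_mul_inv]
  have hs : IntegrableOn s W :=
    integrableOn_of_abs_sub_le measurableSet_Ico measure_Ico_lt_top
      (fun y hy => (hdiff y (hW hy)).continuousWithinAt.mono hW)
      ((Continuous.integrableOn_Icc (by fun_prop)).mono_set Ico_subset_Icc_self) htaylor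
  have hmean : ∫ T in Ico (0 : ℝ) 1, toyProj k s T x = ∫ u in (0 : ℝ)..1, cellMean k s x u := by
    rw [setIntegral_congr_fun measurableSet_Ico fun T _ => toyProj_eq_cellMean (by omega) hx s T,
      setIntegral_Ico_comp_fract_add]
  refine abs_sq_sub_le_of_abs_sub_le hK hC₃.le (hM₂ x hxI) ?_
  rw [hmean]
  convert abs_integral_cellMean_sub_le (by positivity) hs htaylor using 3
  ring

/-- **Tight bias estimate in the toy model under (H3a).**
Assume `s` is twice differentiable on `[0,1)` with first and second derivatives `ds`, `dds`,
`|s t − s y − ds y (t−y) − (1/2) dds y (t−y)²| ≤ C₃ |t−y|³` on `[0,1)` and `|dds| ≤ M₂` on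
`[0,1)`.  Then for `k ≥ 2` and `x ∈ [1/k, 1−1/k]`:
`|𝓑∞(x) − (dds x)²/(144 k⁴)| ≤ 3C₃(M₂ + 3C₃/2)/(4k⁵)`. -/
theorem toy_model_bias_H3a
    (k : ℕ) (hk : 2 ≤ k)
    (s ds dds : ℝ → ℝ) (C₃ M₂ : ℝ) (hC₃ : 0 < C₃)
    (hdiff : ∀ y ∈ Set.Ico (0 : ℝ) 1, HasDerivWithinAt s (ds y) (Set.Ico (0 : ℝ) 1) y)
    (hdiff2 : ∀ y ∈ Set.Ico (0 : ℝ) 1, HasDerivWithinAt ds (dds y) (Set.Ico (0 : ℝ) 1) y)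
    (hH3a : ∀ t ∈ Set.Ico (0 : ℝ) 1, ∀ y ∈ Set.Ico (0 : ℝ) 1,
        |s t - s y - ds y * (t - y) - (1 / 2) * dds y * (t - y) ^ 2| ≤ C₃ * |t - y| ^ 3)
    (hM₂ : ∀ y ∈ Set.Ico (0 : ℝ) 1, |dds y| ≤ M₂)
    (x : ℝ) (hx : x ∈ Set.Icc ((k : ℝ)⁻¹) (1 - (k : ℝ)⁻¹)) :
    |(s x - ∫ T in Set.Ico (0 : ℝ) 1, toyProj k s T x) ^ 2
        - (dds x) ^ 2 / (144 * (k : ℝ) ^ 4)|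
      ≤ 3 * C₃ * (M₂ + 3 * C₃ / 2) / (4 * (k : ℝ) ^ 5) :=
  toy_model_bias_H3a_general k hk s ds dds C₃ M₂ hC₃ hdiff hH3a hM₂ x hx
end

section
/- In the BPRF coordinate chain, for every p ∈ ℕ and all coordinates i ≠ j ∈ {1,…,d}: E[(α_i^{(p)} − β_i^{(p)})(α_j^{(p)} − β_j^{(p)})] = (1 − 1/d)^p (2x_i − 1)(2x_j − 1). -/
open MeasureTheory ProbabilityTheory

/-- The BPRF coordinate chain: `bprfChain J U W x i p ω` is the pair
`(α_i^{(p)}, β_i^{(p)})` of distances from `x` to the two faces, in direction `i`,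
of the cell containing `x` in the depth-`p` balanced purely random forest tree.
(The variables `J p`, `U p`, `W p` drive the step from depth `p` to depth `p+1`.) -/
noncomputable def bprfChain {Ω : Type*} {d : ℕ} (J : ℕ → Ω → Fin d) (U W : ℕ → Ω → ℝ)
    (x : Fin d → ℝ) (i : Fin d) : ℕ → Ω → ℝ × ℝ
  | 0 => fun _ => (x i, 1 - x i)
  | p + 1 => fun ω =>
      let ab := bprfChain J U W x i p ω
      if J p ω = i then
        if W p ω * (ab.1 + ab.2) ≤ ab.1 then (U p ω * ab.1, ab.2)
        else (ab.1, U p ω * ab.2)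
      else ab

/-!
Write `D_k = α_k - β_k`. A step in direction `k` halves `D_k` on average: the face that moves is
chosen with probability proportional to its distance from `x`, and it moves by a uniform factor.
Steps in other directions leave `D_k` unchanged. The step variables at depth `p` are independent
of the chain up to depth `p`, so averaging them out first multiplies `E[D_i D_j]` by
`1 - 1/(2d) - 1/(2d) = 1 - 1/d`.
-/
namespace ProbabilityTheory

variable {Ω β γ : Type*} {mΩ : MeasurableSpace Ω} {μ : Measure Ω}
  [MeasurableSpace β] [MeasurableSpace γ]

theorem IndepFun.integral_comp_eq_integral_integral [IsFiniteMeasure μ] {Y : Ω → β} {X : Ω → γ}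
    (h : IndepFun Y X μ) (hY : AEMeasurable Y μ) (hX : AEMeasurable X μ) {g : β → γ → ℝ}
    (hg : Integrable (Function.uncurry g) ((μ.map Y).prod (μ.map X))) :
    ∫ ω, g (Y ω) (X ω) ∂μ = ∫ y, ∫ z, g y z ∂(μ.map X) ∂(μ.map Y) := by
  have hlaw := (indepFun_iff_map_prod_eq_prod_map_map hY hX).mp h
  rw [← hlaw] at hg
  calc ∫ ω, g (Y ω) (X ω) ∂μ = ∫ q, Function.uncurry g q ∂(μ.map fun ω => (Y ω, X ω)) :=
        (integral_map (hY.prodMk hX) hg.aestronglyMeasurable).symm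
    _ = ∫ y, ∫ z, g y z ∂(μ.map X) ∂(μ.map Y) := by rw [hlaw] at hg ⊢; exact integral_prod _ hg

theorem iIndepFun.indepFun_of_measurable_iSup {ι : Type*} {X : ι → Ω → β}
    (h : iIndepFun X μ) (hX : ∀ q, Measurable (X q)) {S : Set ι} {p : ι} (hp : p ∉ S)
    {Y : Ω → γ} (hY : Measurable[⨆ q ∈ S, MeasurableSpace.comap (X q) inferInstance] Y) :
    IndepFun Y (X p) μ := by
  have hpast := indep_iSup_of_disjoint (fun q => (hX q).comap_le) h.iIndep
    (Set.disjoint_singleton_right.mpr hp)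
  rw [iSup_singleton] at hpast
  exact (IndepFun_iff_Indep _ _ _).mpr (indep_of_indep_of_le_left hpast hY.comap_le)

end ProbabilityTheory

noncomputable def uniformUnitInterval : Measure ℝ := volume.restrict (Set.Icc 0 1)

instance : IsProbabilityMeasure uniformUnitInterval :=
  ⟨by simp [uniformUnitInterval]⟩

lemma ae_uniformUnitInterval_mem : ∀ᵐ u ∂uniformUnitInterval, u ∈ Set.Icc (0 : ℝ) 1 :=
  ae_restrict_mem measurableSet_Icc

lemma uniformUnitInterval_real_Iic {c : ℝ} (h0 : 0 ≤ c) (h1 : c ≤ 1) :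
    uniformUnitInterval.real (Set.Iic c) = c := by
  have : Set.Iic c ∩ Set.Icc 0 1 = Set.Icc 0 c := by
    ext w; simp only [Set.mem_inter_iff, Set.mem_Iic, Set.mem_Icc]; grind
  rw [uniformUnitInterval, measureReal_restrict_apply measurableSet_Iic, this]
  simp [h0]

lemma integral_id_uniformUnitInterval : ∫ u, u ∂uniformUnitInterval = 1 / 2 := by
  rw [uniformUnitInterval, integral_Icc_eq_integral_Ioc,
    ← intervalIntegral.integral_of_le zero_le_one]
  simp

lemma integral_ite_mem_eq {α : Type*} [MeasurableSpace α] (μ : Measure α)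
    [IsProbabilityMeasure μ] {s : Set α} [DecidablePred (· ∈ s)] (hs : MeasurableSet s) (P Q : ℝ) :
    ∫ w, (if w ∈ s then P else Q) ∂μ = μ.real s * P + (1 - μ.real s) * Q := by
  rw [← probReal_compl_eq_one_sub hs, ← smul_eq_mul, ← smul_eq_mul, ← setIntegral_const,
    ← setIntegral_const]
  exact integral_piecewise hs (integrable_const _).integrableOn (integrable_const _).integrableOn

section Step

variable {d : ℕ}

noncomputable def bprfStep (i : Fin d) (ab : ℝ × ℝ) (z : Fin d × ℝ × ℝ) : ℝ × ℝ :=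
  if z.1 = i then
    if z.2.2 * (ab.1 + ab.2) ≤ ab.1 then (z.2.1 * ab.1, ab.2) else (ab.1, z.2.1 * ab.2)
  else ab

def bprfGap (ab : ℝ × ℝ) : ℝ := ab.1 - ab.2

lemma bprfStep_of_ne {i k : Fin d} (h : k ≠ i) (ab uw : ℝ × ℝ) :
    bprfStep i ab (k, uw) = ab := if_neg h

lemma measurable_bprfGap : Measurable bprfGap := measurable_fst.sub measurable_snd

lemma Measurable.bprfStep {α : Type*} {_ : MeasurableSpace α} (i : Fin d) {f : α → ℝ × ℝ}
    {g : α → Fin d × ℝ × ℝ} (hf : Measurable f) (hg : Measurable g) :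
    Measurable fun a => bprfStep i (f a) (g a) := by
  refine Measurable.ite (hg.fst (measurableSet_singleton i)) (Measurable.ite ?_ ?_ ?_) hf
  · exact measurableSet_le (hg.snd.snd.mul (hf.fst.add hf.snd)) hf.fst
  · exact (hg.snd.fst.mul hf.fst).prodMk hf.snd
  · exact hf.fst.prodMk (hg.snd.fst.mul hf.snd)

lemma bprfStep_mem_Icc (i : Fin d) {ab : ℝ × ℝ} {z : Fin d × ℝ × ℝ} (hab : ab ∈ Set.Icc 0 1)
    (hu : z.2.1 ∈ Set.Icc (0 : ℝ) 1) : bprfStep i ab z ∈ Set.Icc 0 1 := by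
  obtain ⟨⟨ha0, hb0⟩, ⟨ha1, hb1⟩⟩ := hab
  obtain ⟨hu0, hu1⟩ := hu
  unfold bprfStep
  split_ifs
  · exact ⟨⟨mul_nonneg hu0 ha0, hb0⟩, ⟨mul_le_one₀ hu1 ha0 ha1, hb1⟩⟩
  · exact ⟨⟨ha0, mul_nonneg hu0 hb0⟩, ⟨ha1, mul_le_one₀ hu1 hb0 hb1⟩⟩
  · exact ⟨⟨ha0, hb0⟩, ⟨ha1, hb1⟩⟩

lemma abs_bprfGap_le_one {ab : ℝ × ℝ} (h : ab ∈ Set.Icc 0 1) : |bprfGap ab| ≤ 1 := by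
  obtain ⟨⟨ha0, hb0⟩, ⟨ha1, hb1⟩⟩ := h
  simp only [Prod.fst_zero, Prod.snd_zero, Prod.fst_one, Prod.snd_one] at *
  rw [bprfGap, abs_le]
  constructor <;> linarith

lemma integral_bprfGap_bprfStep_self (i : Fin d) {ab : ℝ × ℝ} (h : 0 ≤ ab) :
    ∫ uw, bprfGap (bprfStep i ab (i, uw)) ∂(uniformUnitInterval.prod uniformUnitInterval)
      = bprfGap ab / 2 := by
  obtain ⟨a, b⟩ := ab
  obtain ⟨ha, hb⟩ := h
  simp only [Prod.fst_zero, Prod.snd_zero] at ha hb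
  rcases (add_nonneg ha hb).eq_or_lt with hab | hab
  · obtain ⟨rfl, rfl⟩ : a = 0 ∧ b = 0 := by constructor <;> linarith
    simp [bprfStep, bprfGap]
  set m := a / (a + b) with hm_def
  have hm : m ∈ Set.Icc 0 1 := ⟨by positivity, (div_le_one hab).mpr (by linarith)⟩
  have hfun : (fun uw : ℝ × ℝ => bprfGap (bprfStep i (a, b) (i, uw)))
      = fun uw => if uw.2 ∈ Set.Iic m then uw.1 * a - b else a - uw.1 * b := by
    funext uw
    simp only [bprfStep, if_true, Set.mem_Iic, m, le_div_iff₀ hab]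
    split_ifs <;> rfl
  have hint : Integrable (fun uw : ℝ × ℝ =>
      if uw.2 ∈ Set.Iic m then uw.1 * a - b else a - uw.1 * b)
      (uniformUnitInterval.prod uniformUnitInterval) := by
    refine Integrable.of_bound (Measurable.aestronglyMeasurable ?_) (a + b) ?_
    · exact Measurable.ite (measurable_snd measurableSet_Iic) (by fun_prop) (by fun_prop)
    filter_upwards [Measure.quasiMeasurePreserving_fst.ae ae_uniformUnitInterval_mem]
      with uw ⟨hu0, hu1⟩
    rw [Real.norm_eq_abs, abs_le]
    constructor <;> split_ifs <;> nlinarith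
  have hinner (u : ℝ) : ∫ w, (if w ∈ Set.Iic m then u * a - b else a - u * b)
      ∂uniformUnitInterval = (a - b) * u := by
    rw [integral_ite_mem_eq _ measurableSet_Iic, uniformUnitInterval_real_Iic hm.1 hm.2, hm_def]
    field_simp
    ring
  rw [hfun, integral_prod _ hint]
  simp_rw [hinner]
  rw [integral_const_mul, integral_id_uniformUnitInterval, bprfGap]
  ring

noncomputable def bprfStepLaw (d : ℕ) : Measure (Fin d × ℝ × ℝ) :=
  ((d : ENNReal)⁻¹ • Measure.count).prod (uniformUnitInterval.prod uniformUnitInterval)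

instance [NeZero d] : IsProbabilityMeasure (bprfStepLaw d) := by
  have : IsProbabilityMeasure ((d : ENNReal)⁻¹ • (Measure.count : Measure (Fin d))) :=
    ⟨by simpa using
      ENNReal.inv_mul_cancel (by exact_mod_cast NeZero.ne d) (ENNReal.natCast_ne_top d)⟩
  unfold bprfStepLaw
  infer_instance

lemma ae_bprfStepLaw_mem : ∀ᵐ z ∂bprfStepLaw d, z.2.1 ∈ Set.Icc (0 : ℝ) 1 :=
  Measure.quasiMeasurePreserving_snd.ae
    (Measure.quasiMeasurePreserving_fst.ae ae_uniformUnitInterval_mem)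

lemma integrable_bprfGap_mul_bprfGap {α : Type*} [MeasurableSpace α] {ρ : Measure α}
    [IsFiniteMeasure ρ] (i j : Fin d) {f g : α → ℝ × ℝ} {z : α → Fin d × ℝ × ℝ}
    (hf : Measurable f) (hg : Measurable g) (hz : Measurable z)
    (hf01 : ∀ᵐ a ∂ρ, f a ∈ Set.Icc 0 1) (hg01 : ∀ᵐ a ∂ρ, g a ∈ Set.Icc 0 1)
    (hz01 : ∀ᵐ a ∂ρ, (z a).2.1 ∈ Set.Icc 0 1) :
    Integrable (fun a => bprfGap (bprfStep i (f a) (z a)) * bprfGap (bprfStep j (g a) (z a)))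
      ρ := by
  refine Integrable.of_bound ((measurable_bprfGap.comp (hf.bprfStep i hz)).mul
    (measurable_bprfGap.comp (hg.bprfStep j hz))).aestronglyMeasurable 1 ?_
  filter_upwards [hf01, hg01, hz01] with a hfa hga hza
  rw [norm_mul, Real.norm_eq_abs, Real.norm_eq_abs]
  exact mul_le_one₀ (abs_bprfGap_le_one (bprfStep_mem_Icc i hfa hza)) (abs_nonneg _)
    (abs_bprfGap_le_one (bprfStep_mem_Icc j hga hza))

lemma integral_bprfGap_mul_bprfGap_bprfStep {i j : Fin d} (hij : i ≠ j) {y₁ y₂ : ℝ × ℝ}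
    (h₁ : y₁ ∈ Set.Icc 0 1) (h₂ : y₂ ∈ Set.Icc 0 1) :
    ∫ z, bprfGap (bprfStep i y₁ z) * bprfGap (bprfStep j y₂ z) ∂bprfStepLaw d
      = (1 - 1 / d) * (bprfGap y₁ * bprfGap y₂) := by
  have : NeZero d := ⟨i.pos.ne'⟩
  set C := bprfGap y₁ * bprfGap y₂
  have hk (k : Fin d) : ∫ uw, bprfGap (bprfStep i y₁ (k, uw)) * bprfGap (bprfStep j y₂ (k, uw))
      ∂(uniformUnitInterval.prod uniformUnitInterval)
      = C - (if k = i then C / 2 else 0) - (if k = j then C / 2 else 0) := by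
    by_cases hki : k = i
    · subst hki
      simp only [bprfStep_of_ne hij, integral_mul_const, integral_bprfGap_bprfStep_self k h₁.1,
        hij, ↓reduceIte, sub_zero, C]
      ring
    by_cases hkj : k = j
    · subst hkj
      simp only [bprfStep_of_ne (Ne.symm hij), integral_const_mul,
        integral_bprfGap_bprfStep_self k h₂.1, hki, ↓reduceIte, sub_zero, C]
      ring
    · simp [bprfStep_of_ne hki, bprfStep_of_ne hkj, hki, hkj, C]
  have hint : Integrable (fun z => bprfGap (bprfStep i y₁ z) * bprfGap (bprfStep j y₂ z))
      (bprfStepLaw d) := integrable_bprfGap_mul_bprfGap i j measurable_const measurable_const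
    measurable_id (ae_of_all _ fun _ => h₁) (ae_of_all _ fun _ => h₂) ae_bprfStepLaw_mem
  rw [bprfStepLaw] at hint ⊢
  rw [integral_prod _ hint, integral_smul_measure, integral_fintype Integrable.of_finite]
  simp only [hk, count_real_singleton, one_mul, smul_eq_mul, Finset.sum_sub_distrib,
    Finset.sum_ite_eq', Finset.mem_univ, if_true, Finset.sum_const, Finset.card_univ,
    Fintype.card_fin, nsmul_eq_mul, ENNReal.toReal_inv, ENNReal.toReal_natCast]
  have hd : (d : ℝ) ≠ 0 := Nat.cast_ne_zero.mpr (NeZero.ne d)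
  field_simp
  ring

end Step

section Chain

variable {Ω : Type*} {d : ℕ} {J : ℕ → Ω → Fin d} {U W : ℕ → Ω → ℝ} {x : Fin d → ℝ}

lemma bprfChain_succ (i : Fin d) (p : ℕ) (ω : Ω) :
    bprfChain J U W x i (p + 1) ω = bprfStep i (bprfChain J U W x i p ω) (J p ω, U p ω, W p ω) :=
  rfl

lemma measurable_bprfChain_iSup_comap (i : Fin d) (p : ℕ) :
    Measurable[⨆ q ∈ Set.Iio p,
      MeasurableSpace.comap (fun ω => (J q ω, U q ω, W q ω)) inferInstance]
      (bprfChain J U W x i p) := by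
  induction p with
  | zero => exact measurable_const
  | succ p ih =>
    have hpast : (⨆ q ∈ Set.Iio p,
        MeasurableSpace.comap (fun ω => (J q ω, U q ω, W q ω)) inferInstance)
        ≤ ⨆ q ∈ Set.Iio (p + 1),
          MeasurableSpace.comap (fun ω => (J q ω, U q ω, W q ω)) inferInstance :=
      biSup_mono fun q hq => Set.Iio_subset_Iio p.le_succ hq
    have hstep : Measurable[⨆ q ∈ Set.Iio (p + 1),
        MeasurableSpace.comap (fun ω => (J q ω, U q ω, W q ω)) inferInstance]
        (fun ω => (J p ω, U p ω, W p ω)) :=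
      (comap_measurable _).mono (le_iSup₂_of_le p p.lt_succ_self le_rfl) le_rfl
    exact (ih.mono hpast le_rfl).bprfStep i hstep

lemma bprfChain_mem_Icc {i : Fin d} (hx : x i ∈ Set.Icc 0 1) {ω : Ω}
    (hU : ∀ q, U q ω ∈ Set.Icc 0 1) (p : ℕ) : bprfChain J U W x i p ω ∈ Set.Icc 0 1 := by
  induction p with
  | zero =>
    obtain ⟨h0, h1⟩ := hx
    show (x i, 1 - x i) ∈ Set.Icc (0 : ℝ × ℝ) 1
    exact ⟨⟨h0, sub_nonneg.mpr h1⟩, ⟨h1, sub_le_self 1 h0⟩⟩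
  | succ p ih =>
    rw [bprfChain_succ]
    exact bprfStep_mem_Icc i ih (hU p)

variable [MeasureSpace Ω] [IsProbabilityMeasure (ℙ : Measure Ω)]

theorem integral_bprfGap_mul_bprfGap_bprfChain_succ (hx : ∀ k, x k ∈ Set.Icc 0 1)
    (hX : ∀ q, Measurable fun ω => (J q ω, U q ω, W q ω))
    (h_indep : iIndepFun (fun q ω => (J q ω, U q ω, W q ω)) ℙ)
    (h_law : ∀ q, Measure.map (fun ω => (J q ω, U q ω, W q ω)) ℙ = bprfStepLaw d)
    {i j : Fin d} (hij : i ≠ j) (p : ℕ) :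
    ∫ ω, bprfGap (bprfChain J U W x i (p + 1) ω) * bprfGap (bprfChain J U W x j (p + 1) ω)
      = (1 - 1 / d)
        * ∫ ω, bprfGap (bprfChain J U W x i p ω) * bprfGap (bprfChain J U W x j p ω) := by
  have : NeZero d := ⟨i.pos.ne'⟩
  set X := fun q ω => (J q ω, U q ω, W q ω)
  set Y := fun ω => (bprfChain J U W x i p ω, bprfChain J U W x j p ω)
  set G := fun (y : (ℝ × ℝ) × (ℝ × ℝ)) z => bprfGap (bprfStep i y.1 z) * bprfGap (bprfStep j y.2 z)
  have hY_past : Measurable[⨆ q ∈ Set.Iio p,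
      MeasurableSpace.comap (X q) inferInstance] Y :=
    (measurable_bprfChain_iSup_comap i p).prodMk (measurable_bprfChain_iSup_comap j p)
  have hY : Measurable Y := hY_past.mono (iSup₂_le fun q _ => (hX q).comap_le) le_rfl
  have hindep : IndepFun Y (X p) ℙ :=
    h_indep.indepFun_of_measurable_iSup hX Set.self_notMem_Iio hY_past
  have hU : ∀ᵐ ω ∂ℙ, ∀ q, U q ω ∈ Set.Icc 0 1 := ae_all_iff.mpr fun q =>
    ae_of_ae_map (hX q).aemeasurable ((h_law q).symm ▸ ae_bprfStepLaw_mem)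
  have hY01 : ∀ᵐ y ∂(Measure.map Y ℙ), y ∈ Set.Icc 0 1 ×ˢ Set.Icc 0 1 :=
    (ae_map_iff hY.aemeasurable (measurableSet_Icc.prod measurableSet_Icc)).mpr
      (hU.mono fun ω hω => ⟨bprfChain_mem_Icc (hx i) hω p, bprfChain_mem_Icc (hx j) hω p⟩)
  have hG : Integrable (Function.uncurry G) ((Measure.map Y ℙ).prod (Measure.map (X p) ℙ)) := by
    rw [h_law p]
    exact integrable_bprfGap_mul_bprfGap i j measurable_fst.fst measurable_fst.snd measurable_snd
      (Measure.quasiMeasurePreserving_fst.ae (hY01.mono fun y hy => hy.1))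
      (Measure.quasiMeasurePreserving_fst.ae (hY01.mono fun y hy => hy.2))
      (Measure.quasiMeasurePreserving_snd.ae ae_bprfStepLaw_mem)
  calc _ = ∫ ω, G (Y ω) (X p ω) := by simp only [bprfChain_succ]; rfl
    _ = ∫ y, ∫ z, G y z ∂(Measure.map (X p) ℙ) ∂(Measure.map Y ℙ) :=
      hindep.integral_comp_eq_integral_integral hY.aemeasurable (hX p).aemeasurable hG
    _ = ∫ y, (1 - 1 / d) * (bprfGap y.1 * bprfGap y.2) ∂(Measure.map Y ℙ) := by
      rw [h_law p]
      exact integral_congr_ae (hY01.mono fun y hy =>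
        integral_bprfGap_mul_bprfGap_bprfStep hij hy.1 hy.2)
    _ = _ := by
      rw [integral_const_mul, integral_map hY.aemeasurable]
      exact ((measurable_bprfGap.comp measurable_fst).mul
        (measurable_bprfGap.comp measurable_snd)).aestronglyMeasurable

end Chain

theorem bprf_chain_cross_moments_general
    {Ω : Type*} [MeasureSpace Ω] [IsProbabilityMeasure (ℙ : Measure Ω)]
    (d : ℕ)
    (x : Fin d → ℝ) (hx : ∀ i, x i ∈ Set.Ico (0 : ℝ) 1)
    (J : ℕ → Ω → Fin d) (U W : ℕ → Ω → ℝ)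
    (hJ : ∀ p, Measurable (J p)) (hU : ∀ p, Measurable (U p)) (hW : ∀ p, Measurable (W p))
    (h_indep : iIndepFun
        (fun p ω => (J p ω, U p ω, W p ω)) ℙ)
    (h_dist : ∀ p, Measure.map (fun ω => (J p ω, U p ω, W p ω)) ℙ
        = (((d : ENNReal)⁻¹ • (Measure.count : Measure (Fin d))).prod
            ((((volume : Measure ℝ).restrict (Set.Icc 0 1))).prod
              ((volume : Measure ℝ).restrict (Set.Icc 0 1))))) :
    ∀ p : ℕ, ∀ i j : Fin d, i ≠ j →
      (∫ ω : Ω, ((bprfChain J U W x i p ω).1 - (bprfChain J U W x i p ω).2)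
          * ((bprfChain J U W x j p ω).1 - (bprfChain J U W x j p ω).2))
        = (1 - 1 / (d : ℝ)) ^ p * (2 * x i - 1) * (2 * x j - 1) := by
  intro p i j hij
  have hX : ∀ q, Measurable fun ω => (J q ω, U q ω, W q ω) :=
    fun q => (hJ q).prodMk ((hU q).prodMk (hW q))
  change ∫ ω, bprfGap (bprfChain J U W x i p ω) * bprfGap (bprfChain J U W x j p ω) = _
  induction p with
  | zero =>
    simp only [bprfGap, bprfChain, integral_const, probReal_univ, smul_eq_mul, one_mul, pow_zero]
    ring
  | succ p ih =>
    rw [integral_bprfGap_mul_bprfGap_bprfChain_succ (fun k => Set.Ico_subset_Icc_self (hx k)) hX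
      h_indep h_dist hij, ih, pow_succ]
    ring

/-- **Bi-dimensional moments of the BPRF coordinate chain (Proposition 16 of the paper).**
With `(J_p)`, `(U_p)`, `(W_p)` independent, `J_p` uniform on `{1,…,d}` and `U_p`, `W_p`
uniform on `[0,1]`, for every depth `p` and distinct coordinates `i ≠ j`:
`E[(α_i^{(p)} − β_i^{(p)})(α_j^{(p)} − β_j^{(p)})] = (1 − 1/d)^p (2x_i − 1)(2x_j − 1)`. -/
theorem bprf_chain_cross_moments
    {Ω : Type*} [MeasureSpace Ω] [IsProbabilityMeasure (ℙ : Measure Ω)]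
    (d : ℕ) (hd : 1 ≤ d)
    (x : Fin d → ℝ) (hx : ∀ i, x i ∈ Set.Ico (0 : ℝ) 1)
    (J : ℕ → Ω → Fin d) (U W : ℕ → Ω → ℝ)
    (hJ : ∀ p, Measurable (J p)) (hU : ∀ p, Measurable (U p)) (hW : ∀ p, Measurable (W p))
    (h_indep : iIndepFun
        (fun p ω => (J p ω, U p ω, W p ω)) ℙ)
    (h_dist : ∀ p, Measure.map (fun ω => (J p ω, U p ω, W p ω)) ℙ
        = (((d : ENNReal)⁻¹ • (Measure.count : Measure (Fin d))).prod
            ((((volume : Measure ℝ).restrict (Set.Icc 0 1))).prod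
              ((volume : Measure ℝ).restrict (Set.Icc 0 1))))) :
    ∀ p : ℕ, ∀ i j : Fin d, i ≠ j →
      (∫ ω : Ω, ((bprfChain J U W x i p ω).1 - (bprfChain J U W x i p ω).2)
          * ((bprfChain J U W x j p ω).1 - (bprfChain J U W x j p ω).2))
        = (1 - 1 / (d : ℝ)) ^ p * (2 * x i - 1) * (2 * x j - 1) :=
  bprf_chain_cross_moments_general d x hx J U W hJ hU hW h_indep h_dist
end
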